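/- arXiv:quant-ph/0007098 — 2 statements merged into one kernel-verified Lean document; each statement's English description precedes it below -/
import Mathlib

section
/- For every 2×2 complex matrix M with trace M = 0, there exists a 2×2 unitary matrix U such that both diagonal entries of U * M * Uᴴ are zero. -/
/-!
A traceless `2 × 2` matrix `M` has a unit vector `v` with `vᴴ M v = 0`: writing
`M = !![a, b; c, -a]` and `v ∝ (1, t)`, this asks for `a (1 - |t|²) + b t + c t̄ = 0`, which is
solved by `t = u z` with `|z| = 1` chosen to make `b/a · z + c/a · z̄` real and `u` a real root of
the resulting quadratic. Completing `vᴴ` to the first row of a unitary `U` makes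
`(U M Uᴴ)₀₀ = vᴴ M v = 0`, and the other diagonal entry vanishes because the trace is invariant
under unitary conjugation.
-/

open scoped Matrix ComplexConjugate ComplexOrder
open Matrix Complex

theorem Complex.exists_norm_eq_one_mul_eq_norm (d : ℂ) : ∃ z : ℂ, ‖z‖ = 1 ∧ d * z = ‖d‖ := by
  refine ⟨exp (-(arg d * I)), by simpa using norm_exp_ofReal_mul_I (-arg d), ?_⟩
  calc d * exp (-(arg d * I)) = ‖d‖ * exp (arg d * I) * exp (-(arg d * I)) := by
        rw [norm_mul_exp_arg_mul_I]
    _ = ‖d‖ := by rw [mul_assoc, ← exp_add, add_neg_cancel, exp_zero, mul_one]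

theorem Real.exists_sq_eq_mul_add_one (m : ℝ) : ∃ u : ℝ, u ^ 2 = m * u + 1 := by
  obtain ⟨u, hu⟩ := exists_quadratic_eq_zero (a := (1 : ℝ)) (b := -m) (c := -1) one_ne_zero
    ⟨√(m ^ 2 + 4), by rw [discrim, ← sq, Real.sq_sqrt (by positivity)]; ring⟩
  exact ⟨u, by linear_combination hu⟩

theorem Complex.exists_mul_one_sub_mul_conj_add_eq_zero (a b c : ℂ) :
    ∃ t : ℂ, a * (1 - t * conj t) + b * t + c * conj t = 0 := by
  rcases eq_or_ne a 0 with rfl | ha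
  · exact ⟨0, by simp⟩
  obtain ⟨z, hz, hdz⟩ := exists_norm_eq_one_mul_eq_norm (b / a - conj (c / a))
  have hzz : z * conj z = 1 := by rw [mul_conj, normSq_eq_norm_sq, hz]; norm_num
  set s := b / a * z + c / a * conj z
  -- `s - conj s = d z - conj (d z)` with `d = b/a - conj (c/a)`, and `d z` is real
  have hs : (s.re : ℂ) = s := by
    rw [← conj_eq_iff_re]
    have hdz' := congrArg conj hdz
    simp only [map_mul, map_sub, conj_conj, conj_ofReal] at hdz'
    simp only [s, map_add, map_mul, conj_conj]
    linear_combination hdz' - hdz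
  obtain ⟨u, hu⟩ := Real.exists_sq_eq_mul_add_one s.re
  have huC : (u : ℂ) ^ 2 = s.re * u + 1 := by exact_mod_cast hu
  have hb : a * (b / a) = b := mul_div_cancel₀ b ha
  have hc : a * (c / a) = c := mul_div_cancel₀ c ha
  refine ⟨u * z, ?_⟩
  simp only [map_mul, conj_ofReal]
  linear_combination -a * huC - a * u ^ 2 * hzz - a * u * hs - u * z * hb - u * conj z * hc

namespace Matrix

variable {n R 𝕜 : Type*} [Fintype n]

theorem mul_mul_conjTranspose_apply_self [CommRing R] [StarRing R] (A M : Matrix n n R) (i : n) :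
    (A * M * Aᴴ) i i = A i ⬝ᵥ (M *ᵥ star (A i)) := by
  simp only [mul_apply, dotProduct, mulVec, Finset.sum_mul, Finset.mul_sum, conjTranspose_apply,
    Pi.star_apply]
  rw [Finset.sum_comm]
  exact Finset.sum_congr rfl fun _ _ => Finset.sum_congr rfl fun _ _ => by ring

theorem trace_mul_mul_conjTranspose_of_mem_unitaryGroup [DecidableEq n] [CommRing R]
    [StarRing R] {U : Matrix n n R} (hU : U ∈ unitaryGroup n R) (M : Matrix n n R) :
    trace (U * M * Uᴴ) = trace M := by
  rw [trace_mul_cycle, ← star_eq_conjTranspose, mem_unitaryGroup_iff'.mp hU, one_mul]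

theorem exists_dotProduct_star_self_eq_one_of_ne_zero [RCLike 𝕜] {M : Matrix n n 𝕜}
    {w : n → 𝕜} (hw : w ≠ 0) (hMw : star w ⬝ᵥ (M *ᵥ w) = 0) :
    ∃ v : n → 𝕜, star v ⬝ᵥ v = 1 ∧ star v ⬝ᵥ (M *ᵥ v) = 0 := by
  obtain ⟨r, hr, hrw⟩ : ∃ r : ℝ, 0 < r ∧ (r : 𝕜) = star w ⬝ᵥ w :=
    RCLike.pos_iff_exists_ofReal.mp (dotProduct_star_self_pos_iff.mpr hw)
  set c : 𝕜 := (((√r)⁻¹ : ℝ) : 𝕜)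
  have hc : c * star c = (r : 𝕜)⁻¹ := by
    simp only [c, RCLike.star_def, RCLike.conj_ofReal, ← RCLike.ofReal_mul, ← RCLike.ofReal_inv]
    rw [← mul_inv, Real.mul_self_sqrt hr.le]
  refine ⟨c • w, ?_, ?_⟩
  · simp only [star_smul, smul_dotProduct, dotProduct_smul, smul_eq_mul, ← hrw, ← mul_assoc, hc]
    exact inv_mul_cancel₀ (RCLike.ofReal_ne_zero.mpr hr.ne')
  · simp [star_smul, mulVec_smul, smul_dotProduct, dotProduct_smul, hMw]

theorem exists_dotProduct_star_self_eq_one_of_trace_eq_zero {M : Matrix (Fin 2) (Fin 2) ℂ}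
    (hM : M.trace = 0) : ∃ v : Fin 2 → ℂ, star v ⬝ᵥ v = 1 ∧ star v ⬝ᵥ (M *ᵥ v) = 0 := by
  have hM11 : M 1 1 = -M 0 0 := by
    rw [trace_fin_two] at hM
    linear_combination hM
  obtain ⟨t, ht⟩ := Complex.exists_mul_one_sub_mul_conj_add_eq_zero (M 0 0) (M 0 1) (M 1 0)
  refine exists_dotProduct_star_self_eq_one_of_ne_zero (w := ![1, t]) ?_ ?_
  · exact fun h => one_ne_zero (congrFun h 0)
  · simp only [dotProduct, mulVec, Fin.sum_univ_two, Pi.star_apply, hM11, cons_val_zero,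
      cons_val_one, cons_val_fin_one, RCLike.star_def, map_one, one_mul, mul_one]
    linear_combination ht

def unitaryOfRow [Star R] [Neg R] (v : Fin 2 → R) : Matrix (Fin 2) (Fin 2) R :=
  !![star (v 0), star (v 1); -v 1, v 0]

theorem unitaryOfRow_zero [Star R] [Neg R] (v : Fin 2 → R) : unitaryOfRow v 0 = star v := by
  ext j
  fin_cases j <;> rfl

theorem unitaryOfRow_mem_unitaryGroup [CommRing R] [StarRing R] {v : Fin 2 → R}
    (hv : star v ⬝ᵥ v = 1) : unitaryOfRow v ∈ unitaryGroup (Fin 2) R := by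
  simp only [dotProduct, Fin.sum_univ_two, Pi.star_apply] at hv
  rw [mem_unitaryGroup_iff]
  ext i j
  fin_cases i <;> fin_cases j <;>
    simp only [unitaryOfRow, mul_apply, Fin.sum_univ_two, star_apply, of_apply, cons_val',
      cons_val_zero, cons_val_one, empty_val', cons_val_fin_one, star_star, star_neg, one_apply_eq,
      one_apply_ne, ne_eq, Fin.zero_eta, Fin.mk_one, zero_ne_one, one_ne_zero, not_false_eq_true,
      Fin.isValue]
  · exact hv
  · ring
  · ring
  · linear_combination hv

end Matrix

/-- Every traceless 2×2 complex matrix can be "zerodiagonalized" by a unitary conjugation: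
there is a unitary `U` such that both diagonal entries of `U M Uᴴ` vanish. -/
theorem exists_unitary_zerodiagonalize_two (M : Matrix (Fin 2) (Fin 2) ℂ)
    (hM : M.trace = 0) :
    ∃ U ∈ Matrix.unitaryGroup (Fin 2) ℂ,
      ∀ i : Fin 2, (U * M * Uᴴ) i i = 0 := by
  obtain ⟨v, hv, hMv⟩ := exists_dotProduct_star_self_eq_one_of_trace_eq_zero hM
  have hU := unitaryOfRow_mem_unitaryGroup hv
  have h0 : (unitaryOfRow v * M * (unitaryOfRow v)ᴴ) 0 0 = 0 := by
    rw [mul_mul_conjTranspose_apply_self, unitaryOfRow_zero, star_star]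
    exact hMv
  have htrace := trace_mul_mul_conjTranspose_of_mem_unitaryGroup hU M
  rw [hM, trace_fin_two, h0, zero_add] at htrace
  refine ⟨unitaryOfRow v, hU, fun i => ?_⟩
  fin_cases i
  exacts [h0, htrace]
end

section
/- Let ψ and φ be orthogonal vectors in EuclideanSpace ℂ (Fin n × (Fin m × Fin p)) with n ≥ 1 (a tripartite state shared by Alice, Bob, and Claire). Then there exist a natural number k with l := 2^k ≥ n, an orthonormal family a : Fin l → EuclideanSpace ℂ (Fin l), and families Γ, Γ' : Fin l → EuclideanSpace ℂ (Fin m × Fin p), such that: (1) the images ψ', φ' of ψ, φ under the zero-padding embedding into EuclideanSpace ℂ (Fin l × (Fin m × Fin p)) satisfy ψ'(x, w) = Σ_i (a i) x · (Γ i) w and φ'(x, w) = Σ_i (a i) x · (Γ' i) w for all x, w; and (2) ⟪Γ' i, Γ i⟫ = 0 for every i in Fin l. -/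
/-!
Pad Alice's space to dimension `l = 2 ^ k` and view the two states as `l × (m p)` matrices `Ψ`, `Φ`;
then `M = Ψ Φᴴ` has trace `⟪φ, ψ⟫ = 0`. If a unitary `U` makes the diagonal of `Uᴴ M U` vanish,
its columns form Alice's measurement basis and the rows `Γ i`, `Γ' i` of `Uᴴ Ψ`, `Uᴴ Φ` satisfy
`⟪Γ' i, Γ i⟫ = (Uᴴ M U) i i = 0`.

Every traceless matrix of size `2 ^ k` is unitarily similar to one with zero diagonal. In size `2`
it suffices to find a unit vector `v` with `vᴴ M v = 0`: the other diagonal entry then vanishes with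
the trace. For a product `κ × ι`, first make the partial trace over `κ` hollow by a unitary `u`;
then every diagonal block of `(1 ⊗ u)ᴴ M (1 ⊗ u)` is traceless and is made hollow by its own
unitary.
-/
open scoped ComplexInnerProductSpace Kronecker
open Matrix ComplexConjugate

lemma Real.exists_sq_add_sq_eq_one_and_sq_sub_sq_add_mul_eq_zero (r : ℝ) :
    ∃ s t : ℝ, s ^ 2 + t ^ 2 = 1 ∧ s ^ 2 - t ^ 2 + r * (s * t) = 0 := by
  set α := (arctan (r / 2) + Real.pi / 2) / 2
  have h2α : 2 * α = arctan (r / 2) + Real.pi / 2 := by ring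
  have hcos := cos_two_mul' α
  have hsin := sin_two_mul α
  rw [h2α, cos_add_pi_div_two, sin_arctan] at hcos
  rw [h2α, sin_add_pi_div_two, cos_arctan] at hsin
  refine ⟨cos α, sin α, by rw [add_comm, sin_sq_add_cos_sq], ?_⟩
  linear_combination -hcos - r / 2 * hsin

lemma Complex.exists_norm_eq_one_mul_add_mul_conj_eq_mul_ofReal (a B C : ℂ) (ha : a ≠ 0) :
    ∃ z : ℂ, ‖z‖ = 1 ∧ ∃ r : ℝ, B * z + C * conj z = a * r := by
  -- `z` turns `δ` real, and then `conj a * (B * z + C * conj z)` is real as well.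
  set δ := conj a * B - a * conj C
  set z := exp (↑(-arg δ) * I)
  have hδz : δ * z = ‖δ‖ := by
    conv_lhs => rw [← norm_mul_exp_arg_mul_I δ]
    rw [mul_assoc, ← exp_add, ofReal_neg, neg_mul, add_neg_cancel, exp_zero, mul_one]
  set ρ := conj a * (B * z + C * conj z)
  have hρ : conj ρ = ρ := by
    have : ρ - conj ρ = δ * z - conj (δ * z) := by
      simp only [ρ, δ, map_mul, map_add, map_sub, conj_conj]
      ring
    rw [hδz, conj_ofReal, sub_self, sub_eq_zero] at this
    exact this.symm
  refine ⟨z, norm_exp_ofReal_mul_I _, ρ.re / normSq a, ?_⟩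
  have ha' : conj a ≠ 0 := (map_ne_zero _).mpr ha
  rw [ofReal_div, conj_eq_iff_re.mp hρ, ← mul_conj]
  field_simp
  exact mul_comm _ _

namespace Matrix

section Blocks

variable {ι κ R : Type*} [Fintype ι] [Fintype κ]

def partialTrace [AddCommMonoid R] (M : Matrix (κ × ι) (κ × ι) R) : Matrix ι ι R :=
  of fun s t => ∑ x, M (x, s) (x, t)

lemma trace_partialTrace [AddCommMonoid R] (M : Matrix (κ × ι) (κ × ι) R) :
    M.partialTrace.trace = M.trace := by
  rw [trace, trace, Fintype.sum_prod_type, Finset.sum_comm]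
  rfl

lemma trace_blockDiag_star_one_kronecker_mul_mul [DecidableEq κ] [CommSemiring R] [StarRing R]
    (M : Matrix (κ × ι) (κ × ι) R) (u : Matrix ι ι R) (i : ι) :
    (blockDiag (star (1 ⊗ₖ u) * M * (1 ⊗ₖ u)) i).trace = (star u * M.partialTrace * u) i i := by
  simp only [trace, diag_apply, blockDiag_apply, mul_apply, star_apply, kroneckerMap_apply,
    one_apply, ite_mul, one_mul, zero_mul, apply_ite star, star_zero, Fintype.sum_prod_type,
    Finset.sum_ite_irrel, Finset.sum_const_zero, Finset.sum_ite_eq', Finset.mem_univ, ↓reduceIte,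
    mul_ite, Finset.sum_mul, mul_zero, partialTrace, of_apply, Finset.mul_sum]
  rw [Finset.sum_comm]
  exact Finset.sum_congr rfl fun _ _ => Finset.sum_comm

variable [DecidableEq ι]

lemma blockDiag_blockDiagonal_mul [NonUnitalNonAssocSemiring R] (c : ι → Matrix κ κ R)
    (P : Matrix (κ × ι) (κ × ι) R) (i : ι) :
    blockDiag (blockDiagonal c * P) i = c i * blockDiag P i := by
  ext x y
  simp [blockDiag_apply, mul_apply, blockDiagonal_apply, Fintype.sum_prod_type]

lemma blockDiag_mul_blockDiagonal [NonUnitalNonAssocSemiring R] (c : ι → Matrix κ κ R)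
    (P : Matrix (κ × ι) (κ × ι) R) (i : ι) :
    blockDiag (P * blockDiagonal c) i = blockDiag P i * c i := by
  ext x y
  simp [blockDiag_apply, mul_apply, blockDiagonal_apply, Fintype.sum_prod_type]

lemma blockDiagonal_mem_unitary [DecidableEq κ] [Semiring R] [StarRing R] {c : ι → Matrix κ κ R}
    (hc : ∀ i, c i ∈ unitary (Matrix κ κ R)) :
    blockDiagonal c ∈ unitary (Matrix (κ × ι) (κ × ι) R) := by
  simp only [Unitary.mem_iff, star_eq_conjTranspose, blockDiagonal_conjTranspose,
    ← blockDiagonal_mul] at hc ⊢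
  simp only [hc]
  exact ⟨blockDiagonal_one, blockDiagonal_one⟩

end Blocks

variable {ι κ : Type*} [Fintype ι] [DecidableEq ι] [Fintype κ] [DecidableEq κ]

lemma trace_star_mul_mul_of_mem_unitaryGroup {R : Type*} [CommRing R] [StarRing R]
    {U : Matrix ι ι R} (hU : U ∈ unitaryGroup ι R) (M : Matrix ι ι R) :
    (star U * M * U).trace = M.trace := by
  rw [trace_mul_cycle, mem_unitaryGroup_iff.mp hU, one_mul]

lemma apply_eq_sum_of_mem_unitaryGroup {β R : Type*} [CommRing R] [StarRing R]
    {U : Matrix ι ι R} (hU : U ∈ unitaryGroup ι R) (A : Matrix ι β R) (x : ι) (w : β) :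
    A x w = ∑ i, U x i * (star U * A) i w := by
  rw [← mul_apply, ← Matrix.mul_assoc, mem_unitaryGroup_iff.mp hU, Matrix.one_mul]

lemma orthonormal_toLp_transpose_of_mem_unitaryGroup {𝕜 : Type*} [RCLike 𝕜]
    {U : Matrix ι ι 𝕜} (hU : U ∈ unitaryGroup ι 𝕜) :
    Orthonormal 𝕜 fun i => (WithLp.toLp 2 (Uᵀ i) : EuclideanSpace 𝕜 ι) := by
  rw [orthonormal_iff_ite]
  intro i j
  rw [EuclideanSpace.inner_toLp_toLp, ← one_apply, ← mem_unitaryGroup_iff'.mp hU]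
  simp [mul_apply, dotProduct, mul_comm]

lemma mem_unitaryGroup_fin_two_of_normSq_add_normSq_eq_one {α β : ℂ}
    (h : Complex.normSq α + Complex.normSq β = 1) :
    !![α, -conj β; β, conj α] ∈ unitaryGroup (Fin 2) ℂ := by
  rw [mem_unitaryGroup_iff]
  ext i j
  fin_cases i <;> fin_cases j <;>
    simp [mul_apply, Fin.sum_univ_two, Complex.mul_conj, mul_comm, ← Complex.ofReal_add, h,
      add_comm]

/-- A matrix with zero diagonal is called hollow. -/
def TracelessUnitarilyHollow (ι : Type*) [Fintype ι] [DecidableEq ι] : Prop :=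
  ∀ M : Matrix ι ι ℂ, M.trace = 0 → ∃ U ∈ unitaryGroup ι ℂ, ∀ i, (star U * M * U) i i = 0

namespace TracelessUnitarilyHollow

lemma of_unique [Unique ι] : TracelessUnitarilyHollow ι := fun M hM =>
  ⟨1, one_mem _, fun i => by simpa [Subsingleton.elim i default, trace] using hM⟩

lemma of_equiv (e : ι ≃ κ) (h : TracelessUnitarilyHollow ι) : TracelessUnitarilyHollow κ := by
  intro M hM
  obtain ⟨U, hU, hUM⟩ :=
    h (M.submatrix e e) (by rw [← hM]; exact Fintype.sum_equiv e _ _ fun _ => rfl)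
  refine ⟨U.submatrix e.symm e.symm, ?_, fun i => ?_⟩
  · rw [mem_unitaryGroup_iff] at hU ⊢
    rw [star_eq_conjTranspose, conjTranspose_submatrix, submatrix_mul_equiv,
      ← star_eq_conjTranspose, hU, submatrix_one_equiv]
  · have hM' : M = (M.submatrix e e).submatrix e.symm e.symm := by simp
    rw [← hUM (e.symm i), star_eq_conjTranspose, conjTranspose_submatrix]
    conv_lhs => rw [hM', submatrix_mul_equiv, submatrix_mul_equiv]
    rfl

lemma fin_two : TracelessUnitarilyHollow (Fin 2) := by
  intro M hM
  rw [trace_fin_two] at hM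
  suffices ∃ U ∈ unitaryGroup (Fin 2) ℂ, (star U * M * U) 0 0 = 0 by
    obtain ⟨U, hU, hU0⟩ := this
    have htr := trace_star_mul_mul_of_mem_unitaryGroup hU M
    rw [trace_fin_two, trace_fin_two, hM, hU0, zero_add] at htr
    exact ⟨U, hU, Fin.forall_fin_two.mpr ⟨hU0, htr⟩⟩
  by_cases ha : M 0 0 = 0
  · exact ⟨1, one_mem _, by simpa using ha⟩
  obtain ⟨z, hz, r, hr⟩ :=
    Complex.exists_norm_eq_one_mul_add_mul_conj_eq_mul_ofReal _ (M 0 1) (M 1 0) ha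
  obtain ⟨s, t, hst, hstr⟩ := Real.exists_sq_add_sq_eq_one_and_sq_sub_sq_add_mul_eq_zero r
  refine ⟨_, mem_unitaryGroup_fin_two_of_normSq_add_normSq_eq_one (α := s) (β := t * z) ?_, ?_⟩
  · rw [Complex.normSq_ofReal, Complex.normSq_mul, Complex.normSq_ofReal,
      Complex.normSq_eq_norm_sq z, hz]
    linear_combination hst
  · have hz' : conj z * z = 1 := by rw [Complex.conj_mul', hz]; simp
    have hstr' : (s : ℂ) ^ 2 - (t : ℂ) ^ 2 + r * (s * t) = 0 := by exact_mod_cast hstr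
    simp only [mul_apply, star_apply, of_apply, cons_val', cons_val_zero, cons_val_one,
      cons_val_fin_one, RCLike.star_def, Fin.sum_univ_two, Complex.conj_ofReal, map_mul]
    linear_combination M 0 0 * hstr' + s * t * hr + t ^ 2 * M 1 1 * hz' + t ^ 2 * hM

lemma prod (hι : TracelessUnitarilyHollow ι) (hκ : TracelessUnitarilyHollow κ) :
    TracelessUnitarilyHollow (κ × ι) := by
  intro M hM
  obtain ⟨u, hu, huM⟩ := hι M.partialTrace (by rw [trace_partialTrace, hM])
  set V : Matrix (κ × ι) (κ × ι) ℂ := 1 ⊗ₖ u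
  have hV : V ∈ unitaryGroup (κ × ι) ℂ := kronecker_mem_unitary (one_mem _) hu
  choose c hc hcM using fun i => hκ (blockDiag (star V * M * V) i)
    (by rw [trace_blockDiag_star_one_kronecker_mul_mul, huM])
  refine ⟨V * blockDiagonal c, mul_mem hV (blockDiagonal_mem_unitary hc), fun ⟨x, i⟩ => ?_⟩
  calc (star (V * blockDiagonal c) * M * (V * blockDiagonal c)) (x, i) (x, i)
      = blockDiag (star (blockDiagonal c) * (star V * M * V) * blockDiagonal c) i x x := by
        simp only [blockDiag_apply, star_mul, Matrix.mul_assoc]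
    _ = 0 := by
        rw [blockDiag_mul_blockDiagonal, star_eq_conjTranspose, blockDiagonal_conjTranspose,
          blockDiag_blockDiagonal_mul]
        exact hcM i x

lemma fin_two_pow : ∀ k : ℕ, TracelessUnitarilyHollow (Fin (2 ^ k))
  | 0 => of_equiv (finCongr (pow_zero 2).symm) of_unique
  | k + 1 => of_equiv finProdFinEquiv (prod fin_two (fin_two_pow k))

end TracelessUnitarilyHollow

end Matrix

section ZeroPadding

variable {n : ℕ} {β : Type*}

def zeroPadMatrix (l : ℕ) (ψ : EuclideanSpace ℂ (Fin n × β)) : Matrix (Fin l) β ℂ :=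
  of fun x w => if h : (x : ℕ) < n then ψ (⟨x, h⟩, w) else 0

lemma Fin.sum_dite_val_lt {M : Type*} [AddCommMonoid M] {l : ℕ} (h : n ≤ l) (f : Fin n → M) :
    ∑ x : Fin l, (if hx : (x : ℕ) < n then f ⟨x, hx⟩ else 0) = ∑ v, f v := by
  obtain ⟨d, rfl⟩ := Nat.exists_eq_add_of_le h
  simp [Fin.sum_univ_add]

lemma trace_zeroPadMatrix_mul_conjTranspose [Fintype β] {l : ℕ} (h : n ≤ l)
    (ψ φ : EuclideanSpace ℂ (Fin n × β)) :
    (zeroPadMatrix l ψ * (zeroPadMatrix l φ)ᴴ).trace = ⟪φ, ψ⟫ := by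
  let g : Fin n → ℂ := fun v => ∑ w, ψ (v, w) * conj (φ (v, w))
  have hdiag (x : Fin l) : (zeroPadMatrix l ψ * (zeroPadMatrix l φ)ᴴ) x x =
      if hx : (x : ℕ) < n then g ⟨x, hx⟩ else 0 := by
    simp only [mul_apply, zeroPadMatrix, conjTranspose_apply, of_apply, g]
    split_ifs <;> simp
  calc (zeroPadMatrix l ψ * (zeroPadMatrix l φ)ᴴ).trace
      = ∑ x : Fin l, if hx : (x : ℕ) < n then g ⟨x, hx⟩ else 0 :=
        Finset.sum_congr rfl fun x _ => hdiag x
    _ = ∑ v, g v := Fin.sum_dite_val_lt h g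
    _ = ⟪φ, ψ⟫ := by
      rw [EuclideanSpace.inner_eq_star_dotProduct, dotProduct, Fintype.sum_prod_type]
      rfl

end ZeroPadding

theorem orthogonal_tripartite_states_locally_distinguishable_general (n m p : ℕ)
    (ψ φ : EuclideanSpace ℂ (Fin n × (Fin m × Fin p))) (h : ⟪φ, ψ⟫ = 0) :
    ∃ k : ℕ, n ≤ 2 ^ k ∧
      ∃ a : Fin (2 ^ k) → EuclideanSpace ℂ (Fin (2 ^ k)),
        Orthonormal ℂ a ∧
        ∃ Γ Γ' : Fin (2 ^ k) → EuclideanSpace ℂ (Fin m × Fin p),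
          (∀ (x : Fin (2 ^ k)) (w : Fin m × Fin p),
            (if h : (x : ℕ) < n then ψ (⟨(x : ℕ), h⟩, w) else 0) =
              ∑ i : Fin (2 ^ k), a i x * Γ i w) ∧
          (∀ (x : Fin (2 ^ k)) (w : Fin m × Fin p),
            (if h : (x : ℕ) < n then φ (⟨(x : ℕ), h⟩, w) else 0) =
              ∑ i : Fin (2 ^ k), a i x * Γ' i w) ∧
          (∀ i : Fin (2 ^ k), ⟪Γ' i, Γ i⟫ = 0) := by
  have hn : n ≤ 2 ^ n := n.lt_two_pow_self.le
  set Ψ := zeroPadMatrix (2 ^ n) ψ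
  set Φ := zeroPadMatrix (2 ^ n) φ
  obtain ⟨U, hU, hUM⟩ := TracelessUnitarilyHollow.fin_two_pow n (Ψ * Φᴴ)
    (by rw [trace_zeroPadMatrix_mul_conjTranspose hn, h])
  refine ⟨n, hn, fun i => WithLp.toLp 2 (Uᵀ i), orthonormal_toLp_transpose_of_mem_unitaryGroup hU,
    fun i => WithLp.toLp 2 ((star U * Ψ) i), fun i => WithLp.toLp 2 ((star U * Φ) i),
    apply_eq_sum_of_mem_unitaryGroup hU Ψ, apply_eq_sum_of_mem_unitaryGroup hU Φ, fun i => ?_⟩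
  calc ⟪WithLp.toLp 2 ((star U * Φ) i), WithLp.toLp 2 ((star U * Ψ) i)⟫
      = ((star U * Ψ) * (star U * Φ)ᴴ) i i := rfl
    _ = (star U * (Ψ * Φᴴ) * U) i i := by
      rw [conjTranspose_mul, star_eq_conjTranspose, conjTranspose_conjTranspose]
      simp only [Matrix.mul_assoc]
    _ = 0 := hUM i

/-- Multipartite reduction of the main theorem: two orthogonal tripartite states `ψ`, `φ`
shared by Alice (dimension `n ≥ 1`), Bob (dimension `m`) and Claire (dimension `p`) can,
after enlarging Alice's space to dimension `l = 2^k ≥ n` by zero-padding, be written as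
`ψ' = Σ_i |a_i⟩|Γ_i⟩` and `φ' = Σ_i |a_i⟩|Γ'_i⟩` with `{a_i}` an orthonormal family and
`⟪Γ'_i, Γ_i⟫ = 0` for all `i`: after Alice's measurement, Bob and Claire are left with one
of two orthogonal bipartite states and the problem cascades to the bipartite case. -/
theorem orthogonal_tripartite_states_locally_distinguishable (n m p : ℕ) (hn : 1 ≤ n)
    (ψ φ : EuclideanSpace ℂ (Fin n × (Fin m × Fin p))) (h : ⟪φ, ψ⟫ = 0) :
    ∃ k : ℕ, n ≤ 2 ^ k ∧
      ∃ a : Fin (2 ^ k) → EuclideanSpace ℂ (Fin (2 ^ k)),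
        Orthonormal ℂ a ∧
        ∃ Γ Γ' : Fin (2 ^ k) → EuclideanSpace ℂ (Fin m × Fin p),
          (∀ (x : Fin (2 ^ k)) (w : Fin m × Fin p),
            (if h : (x : ℕ) < n then ψ (⟨(x : ℕ), h⟩, w) else 0) =
              ∑ i : Fin (2 ^ k), a i x * Γ i w) ∧
          (∀ (x : Fin (2 ^ k)) (w : Fin m × Fin p),
            (if h : (x : ℕ) < n then φ (⟨(x : ℕ), h⟩, w) else 0) =
              ∑ i : Fin (2 ^ k), a i x * Γ' i w) ∧
          (∀ i : Fin (2 ^ k), ⟪Γ' i, Γ i⟫ = 0) :=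
  orthogonal_tripartite_states_locally_distinguishable_general n m p ψ φ h
end
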